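/- Fix an integer d ≥ 4 and let I ⊆ ℚ[c₁,c₂,c₃] be the ideal generated by s₀, s₁, s₂ as in the nodal plane curve computation (s₀ = −2d(d−1)(d−2)(d−3)c₂ + 2d(d−1)²(d−2)c₁², s₁ = −2d(d−3)(d²−3d+3)c₃ + 2d(d−1)(2d²−8d+7)c₁c₂ − 2d(d−1)²(d−2)c₁³, s₂ = 2d(2d³−10d²+16d−9)c₁c₃ + 2d(d−1)²(d−2)c₁⁴ + 2d(d−1)(d−2)(d−3)c₂² − 2d(d−1)(3d²−11d+9)c₁²c₂). Then (d−3)²(d²−3d+3)c₃ − (d−1)²(d²−3d+1)c₁³ ∈ I, and also c₁c₃ ∈ I and c₁⁴ ∈ I. -/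

import Mathlib

noncomputable section

abbrev R3 : Type := MvPolynomial (Fin 3) ℚ

noncomputable def cc (i : Fin 3) : R3 := MvPolynomial.X i

noncomputable def s0 (d : ℕ) : R3 :=
  -2 * (d : R3) * ((d : R3) - 1) * ((d : R3) - 2) * ((d : R3) - 3) * cc 1
    + 2 * (d : R3) * ((d : R3) - 1) ^ 2 * ((d : R3) - 2) * cc 0 ^ 2

noncomputable def s1 (d : ℕ) : R3 :=
  -2 * (d : R3) * ((d : R3) - 3) * ((d : R3) ^ 2 - 3 * (d : R3) + 3) * cc 2
    + 2 * (d : R3) * ((d : R3) - 1) * (2 * (d : R3) ^ 2 - 8 * (d : R3) + 7) * (cc 0 * cc 1)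
    - 2 * (d : R3) * ((d : R3) - 1) ^ 2 * ((d : R3) - 2) * cc 0 ^ 3

noncomputable def s2 (d : ℕ) : R3 :=
  2 * (d : R3) * (2 * (d : R3) ^ 3 - 10 * (d : R3) ^ 2 + 16 * (d : R3) - 9) * (cc 0 * cc 2)
    + 2 * (d : R3) * ((d : R3) - 1) ^ 2 * ((d : R3) - 2) * cc 0 ^ 4
    + 2 * (d : R3) * ((d : R3) - 1) * ((d : R3) - 2) * ((d : R3) - 3) * cc 1 ^ 2
    - 2 * (d : R3) * ((d : R3) - 1) * (3 * (d : R3) ^ 2 - 11 * (d : R3) + 9) * (cc 0 ^ 2 * cc 1)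

noncomputable def Irel (d : ℕ) : Ideal R3 := Ideal.span {s0 d, s1 d, s2 d}

/-!
Each membership comes from an explicit `ℚ[c₁, c₂, c₃]`-combination of `s₀, s₁, s₂` that equals a
rational multiple of the target: eliminating `c₂` between `s₀` and `s₁` gives the cubic relation
(times `2d(d-2)`), `s₂ + c₂ s₀ + c₁ s₁` is `2d²(d-2)² c₁c₃`, and then `c₁` times the cubic relation
leaves `(d-1)²(d²-3d+1) c₁⁴` modulo `c₁c₃`. These factors are nonzero for natural `d > 2`.
In the code `cc i` stands for `c_{i+1}`.
-/

open MvPolynomial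

lemma mem_of_C_mul_mem {K σ : Type*} [Field K] {I : Ideal (MvPolynomial σ K)}
    {q : K} {t : MvPolynomial σ K} (hq : q ≠ 0) (h : C q * t ∈ I) : t ∈ I :=
  (I.unit_mul_mem_iff_mem ((isUnit_iff_ne_zero.mpr hq).map C)).mp h

lemma natCast_sq_sub_three_mul_add_one_ne_zero (d : ℕ) : (d : ℚ) ^ 2 - 3 * d + 1 ≠ 0 := by
  rcases le_or_gt d 2 with hd | hd
  · interval_cases d <;> norm_num
  · have : (3 : ℚ) ≤ d := by exact_mod_cast hd
    nlinarith

lemma s0_mem_Irel (d : ℕ) : s0 d ∈ Irel d := Ideal.subset_span (by simp)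

lemma s1_mem_Irel (d : ℕ) : s1 d ∈ Irel d := Ideal.subset_span (by simp)

lemma s2_mem_Irel (d : ℕ) : s2 d ∈ Irel d := Ideal.subset_span (by simp)

lemma two_mul_natCast_mul_sub_two_ne_zero {d : ℕ} (h0 : d ≠ 0) (h2 : d ≠ 2) :
    2 * (d : ℚ) * (d - 2) ≠ 0 :=
  mul_ne_zero (mul_ne_zero two_ne_zero (Nat.cast_ne_zero.mpr h0))
    (sub_ne_zero.mpr (by exact_mod_cast h2))

lemma cubic_relation_mem_Irel {d : ℕ} (h0 : d ≠ 0) (h2 : d ≠ 2) :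
    ((d : R3) - 3) ^ 2 * ((d : R3) ^ 2 - 3 * (d : R3) + 3) * cc 2
      - ((d : R3) - 1) ^ 2 * ((d : R3) ^ 2 - 3 * (d : R3) + 1) * cc 0 ^ 3 ∈ Irel d := by
  refine mem_of_C_mul_mem (two_mul_natCast_mul_sub_two_ne_zero h0 h2) ?_
  have key : C (2 * (d : ℚ) * (d - 2)) *
      (((d : R3) - 3) ^ 2 * ((d : R3) ^ 2 - 3 * (d : R3) + 3) * cc 2
        - ((d : R3) - 1) ^ 2 * ((d : R3) ^ 2 - 3 * (d : R3) + 1) * cc 0 ^ 3)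
      = -(((d : R3) - 3) * ((d : R3) - 2)) * s1 d
        - (2 * (d : R3) ^ 2 - 8 * (d : R3) + 7) * cc 0 * s0 d := by
    simp only [map_mul, map_sub, map_ofNat, map_natCast, s0, s1]
    ring
  rw [key]
  exact sub_mem (Ideal.mul_mem_left _ _ (s1_mem_Irel d)) (Ideal.mul_mem_left _ _ (s0_mem_Irel d))

lemma cc0_mul_cc2_mem_Irel {d : ℕ} (h0 : d ≠ 0) (h2 : d ≠ 2) : cc 0 * cc 2 ∈ Irel d := by
  have hq : (2 * (d : ℚ) * (d - 2)) * (d * (d - 2)) ≠ 0 :=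
    mul_ne_zero (two_mul_natCast_mul_sub_two_ne_zero h0 h2)
      (mul_ne_zero (Nat.cast_ne_zero.mpr h0) (sub_ne_zero.mpr (by exact_mod_cast h2)))
  refine mem_of_C_mul_mem hq ?_
  have key : C ((2 * (d : ℚ) * (d - 2)) * (d * (d - 2))) * (cc 0 * cc 2)
      = s2 d + cc 1 * s0 d + cc 0 * s1 d := by
    simp only [map_mul, map_sub, map_ofNat, map_natCast, s0, s1, s2]
    ring
  rw [key]
  exact add_mem (add_mem (s2_mem_Irel d) (Ideal.mul_mem_left _ _ (s0_mem_Irel d)))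
    (Ideal.mul_mem_left _ _ (s1_mem_Irel d))

lemma cc0_pow_four_mem_Irel {d : ℕ} (hd : 2 < d) : cc 0 ^ 4 ∈ Irel d := by
  have h0 : d ≠ 0 := by omega
  have h2 : d ≠ 2 := by omega
  have hq : ((d : ℚ) - 1) ^ 2 * ((d : ℚ) ^ 2 - 3 * d + 1) ≠ 0 :=
    mul_ne_zero (pow_ne_zero 2 (sub_ne_zero.mpr (by exact_mod_cast (show d ≠ 1 by omega))))
      (natCast_sq_sub_three_mul_add_one_ne_zero d)
  refine mem_of_C_mul_mem hq ?_
  have key : C (((d : ℚ) - 1) ^ 2 * ((d : ℚ) ^ 2 - 3 * d + 1)) * cc 0 ^ 4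
      = ((d : R3) - 3) ^ 2 * ((d : R3) ^ 2 - 3 * (d : R3) + 3) * (cc 0 * cc 2)
        - cc 0 * (((d : R3) - 3) ^ 2 * ((d : R3) ^ 2 - 3 * (d : R3) + 3) * cc 2
          - ((d : R3) - 1) ^ 2 * ((d : R3) ^ 2 - 3 * (d : R3) + 1) * cc 0 ^ 3) := by
    simp only [map_mul, map_sub, map_add, map_pow, map_one, map_ofNat, map_natCast]
    ring
  rw [key]
  exact sub_mem (Ideal.mul_mem_left _ _ (cc0_mul_cc2_mem_Irel h0 h2))
    (Ideal.mul_mem_left _ _ (cubic_relation_mem_Irel h0 h2))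

theorem stmt_7 (d : ℕ) (hd : 4 ≤ d) :
    ((d : R3) - 3) ^ 2 * ((d : R3) ^ 2 - 3 * (d : R3) + 3) * cc 2
      - ((d : R3) - 1) ^ 2 * ((d : R3) ^ 2 - 3 * (d : R3) + 1) * cc 0 ^ 3 ∈ Irel d
    ∧ cc 0 * cc 2 ∈ Irel d ∧ cc 0 ^ 4 ∈ Irel d := by
  have h0 : d ≠ 0 := by omega
  have h2 : d ≠ 2 := by omega
  exact ⟨cubic_relation_mem_Irel h0 h2, cc0_mul_cc2_mem_Irel h0 h2, cc0_pow_four_mem_Irel (by omega)⟩
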